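/- arXiv:2510.18891 — 4 statements merged into one kernel-verified Lean document; each statement's English description precedes it below -/
import Mathlib

section
/- Let a_1 = 1 and a_n = a_{n-1} + lcm(n, a_{n-1}) for n ≥ 2, and b_n = n / gcd(n, a_{n-1}). For every prime q ≥ 5, we have gcd(q, a_{q-1}) = 1, and consequently b_q = q. -/
theorem stmt_4 (a b : ℕ → ℕ) (ha1 : a 1 = 1)
    (ha : ∀ n, 2 ≤ n → a n = a (n - 1) + Nat.lcm n (a (n - 1)))
    (hb : ∀ n, 2 ≤ n → b n = n / Nat.gcd n (a (n - 1))) :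
    ∀ q, Nat.Prime q → 5 ≤ q → Nat.gcd q (a (q - 1)) = 1 ∧ b q = q := by
  have hpos : ∀ n, 1 ≤ n → 0 < a n := by
    intro n hn
    induction n with
    | zero => omega
    | succ m ih =>
      rcases Nat.lt_or_ge m 1 with h | h
      · have : m = 0 := by omega
        subst this; simp [ha1]
      · rw [ha (m+1) (by omega)]
        simp only [Nat.add_sub_cancel]
        have := ih h
        omega
  have hb_le : ∀ n, 2 ≤ n → b n ≤ n := by
    intro n hn; rw [hb n hn]; exact Nat.div_le_self _ _
  have hmul : ∀ n, 2 ≤ n → a n = a (n-1) * (1 + b n) := by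
    intro n hn
    set m := a (n-1) with hmdef
    set g := Nat.gcd n m with hgdef
    have hg : g ∣ n := Nat.gcd_dvd_left _ _
    obtain ⟨c, hc⟩ := hg
    have hgpos : 0 < g := Nat.gcd_pos_of_pos_left _ (by omega)
    have hbc : b n = c := by
      rw [hb n hn, ← hgdef, hc, Nat.mul_div_cancel_left _ hgpos]
    have hlcm : Nat.lcm n m = c * m := by
      rw [Nat.lcm, ← hgdef, hc, Nat.mul_assoc, Nat.mul_div_cancel_left _ hgpos]
    rw [ha n hn, ← hmdef, hlcm, hbc]; ring
  have heven : ∀ n, 3 ≤ n → 2 ∣ a n := by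
    intro n hn
    induction n with
    | zero => omega
    | succ m ih =>
      rcases Nat.lt_or_ge m 3 with h | h
      · have hm : m = 2 := by omega
        subst hm
        have ha2 : a 2 = 3 := by
          rw [ha 2 (by norm_num)]
          norm_num [ha1]
        rw [ha 3 (by norm_num)]
        norm_num [ha2]
      · rw [hmul (m+1) (by omega)]
        simp only [Nat.add_sub_cancel]
        exact Dvd.dvd.mul_right (ih h) _
  intro q hq hq5
  have hqodd : q % 2 = 1 := by
    have h := Nat.Prime.odd_of_ne_two hq (by omega)
    rw [Nat.odd_iff] at h
    exact h
  have key : ∀ k, 1 ≤ k → k ≤ q - 1 → ¬ q ∣ a k := by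
    intro k
    induction k using Nat.strong_induction_on with
    | _ k ih =>
      intro hk1 hkq hdvd
      rcases Nat.lt_or_ge k 2 with h | h
      · have : k = 1 := by omega
        subst this
        rw [ha1] at hdvd
        have := Nat.le_of_dvd one_pos hdvd
        omega
      · rw [hmul k h] at hdvd
        rcases (Nat.Prime.dvd_mul hq).mp hdvd with h1 | h2
        · exact ih (k-1) (by omega) (by omega) (by omega) h1
        · have hble := hb_le k h
          have hq' := Nat.le_of_dvd (by omega) h2
          have heq : 1 + b k = q := by omega
          have hkeq : k = q - 1 := by omega
          have hbk : b k = k := by omega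
          rw [hb k h] at hbk
          have hg1 : Nat.gcd k (a (k-1)) = 1 := by
            have hgpos : 0 < Nat.gcd k (a (k-1)) := Nat.gcd_pos_of_pos_left _ (by omega)
            rcases Nat.lt_or_ge (Nat.gcd k (a (k-1))) 2 with hg | hg
            · omega
            · have := Nat.div_lt_self (by omega : 0 < k) hg
              omega
          have h2k : 2 ∣ k := by omega
          have h2a : 2 ∣ a (k-1) := heven (k-1) (by omega)
          have : 2 ∣ Nat.gcd k (a (k-1)) := Nat.dvd_gcd h2k h2a
          omega
  have hcop : Nat.gcd q (a (q-1)) = 1 :=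
    (Nat.Prime.coprime_iff_not_dvd hq).mpr (key (q-1) (by omega) (by omega))
  refine ⟨hcop, ?_⟩
  rw [hb q (by omega), hcop, Nat.div_one]
end

section
/- Define the guaranteed stock C_n = ∏_{q ≤ n, q prime, q ≠ 3} (q + 1), with C_1 = 1. Let a_1 = 1 and a_n = a_{n-1} + lcm(n, a_{n-1}) for n ≥ 2. Then C_{n-1} divides a_{n-1} for every n ≥ 2. -/
/-- The guaranteed stock `C_m = ∏_{q ≤ m, q prime, q ≠ 3} (q+1)`. -/
def Cstock (m : ℕ) : ℕ :=
  ∏ q ∈ (Finset.Iic m).filter (fun q => Nat.Prime q ∧ q ≠ 3), (q + 1)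

section Aux

variable (a : ℕ → ℕ) (ha1 : a 1 = 1)
  (ha : ∀ n, 2 ≤ n → a n = a (n - 1) + Nat.lcm n (a (n - 1)))

include ha1 ha

lemma aux_pos : ∀ m, 1 ≤ m → 0 < a m := by
  intro m hm
  induction m with
  | zero => omega
  | succ k ih =>
    rcases Nat.lt_or_ge 1 (k + 1) with h | h
    · have h2 : 2 ≤ k + 1 := by omega
      rw [ha (k + 1) h2]
      simp only [Nat.add_sub_cancel]
      have := ih (by omega)
      omega
    · have hk : k = 0 := by omega
      subst hk
      simp [ha1]

lemma aux_mono : ∀ m n, 1 ≤ m → m ≤ n → a m ∣ a n := by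
  intro m n hm hmn
  induction n with
  | zero => omega
  | succ k ih =>
    rcases Nat.lt_or_ge k (m) with h | h
    · have : m = k + 1 := by omega
      rw [this]
    · have hk := ih h
      have h2 : 2 ≤ k + 1 := by omega
      rw [ha (k + 1) h2]
      simp only [Nat.add_sub_cancel]
      exact hk.trans (Dvd.dvd.add dvd_rfl (Nat.dvd_lcm_right _ _))

lemma aux_a2 : a 2 = 3 := by
  have := ha 2 (by norm_num)
  simp [ha1] at this
  simpa using this

lemma aux_a3 : a 3 = 6 := by
  have h2 := aux_a2 a ha1 ha
  have := ha 3 (by norm_num)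
  norm_num [h2] at this
  exact this

lemma aux_even : ∀ m, 3 ≤ m → 2 ∣ a m := by
  intro m hm
  have h3 : a 3 ∣ a m := aux_mono a ha1 ha 3 m (by omega) hm
  rw [aux_a3 a ha1 ha] at h3
  exact dvd_trans (by norm_num) h3

lemma aux_factor : ∀ m, 2 ≤ m →
    a m = a (m - 1) * (1 + m / Nat.gcd m (a (m - 1))) := by
  intro m hm
  have hdpos : 0 < Nat.gcd m (a (m - 1)) := Nat.gcd_pos_of_pos_left _ (by omega)
  have hdm : Nat.gcd m (a (m - 1)) ∣ m := Nat.gcd_dvd_left _ _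
  have hc : Nat.gcd m (a (m - 1)) * Nat.lcm m (a (m - 1)) = m * a (m - 1) :=
    Nat.gcd_mul_lcm _ _
  have hc2 : Nat.gcd m (a (m - 1)) * (m / Nat.gcd m (a (m - 1)) * a (m - 1))
      = m * a (m - 1) := by
    rw [← Nat.mul_assoc, Nat.mul_div_cancel' hdm]
  have hlcm : Nat.lcm m (a (m - 1)) = m / Nat.gcd m (a (m - 1)) * a (m - 1) :=
    Nat.eq_of_mul_eq_mul_left hdpos (hc.trans hc2.symm)
  rw [ha m hm, hlcm]
  ring

lemma aux_notdvd : ∀ q, Nat.Prime q → 5 ≤ q → ∀ m, 1 ≤ m → m < q → ¬ q ∣ a m := by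
  intro q hq hq5
  intro m
  induction m with
  | zero => omega
  | succ k ih =>
    intro _ hmq
    rcases Nat.lt_or_ge 1 (k + 1) with h | h
    · -- k + 1 ≥ 2
      have hm2 : 2 ≤ k + 1 := by omega
      rw [aux_factor a ha1 ha (k + 1) hm2]
      simp only [Nat.add_sub_cancel]
      have hdpos : 0 < Nat.gcd (k + 1) (a k) := Nat.gcd_pos_of_pos_left _ (by omega)
      have hdgcd : 2 ∣ k + 1 → 2 ∣ a k → 2 ∣ Nat.gcd (k + 1) (a k) :=
        fun h1 h2 => Nat.dvd_gcd h1 h2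
      generalize hd : Nat.gcd (k + 1) (a k) = d at hdpos hdgcd ⊢
      intro hdvd
      rcases (Nat.Prime.dvd_mul hq).mp hdvd with h1 | h2
      · exact ih (by omega) (by omega) h1
      · -- q ∣ 1 + (k+1)/d
        have hle : (k + 1) / d ≤ k + 1 := Nat.div_le_self _ _
        have hpos : 0 < 1 + (k + 1) / d := Nat.lt_of_lt_of_le Nat.zero_lt_one (Nat.le_add_right 1 _)
        have hqle : q ≤ 1 + (k + 1) / d := Nat.le_of_dvd hpos h2
        -- so q = 1 + (k+1)/d and (k+1)/d = k+1, hence d = 1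
        have heq : (k + 1) / d = k + 1 := by omega
        have hqeq : q = k + 2 := by omega
        have hd1 : d = 1 := by
          by_contra hd1
          have : (k + 1) / d < k + 1 := Nat.div_lt_self (by omega) (by omega)
          omega
        -- but k+1 = q - 1 is even and a k is even (k = q - 2 ≥ 3)
        have hodd : Odd q := hq.odd_of_ne_two (by omega)
        have heven : 2 ∣ (k + 1) := by
          obtain ⟨t, ht⟩ := hodd
          omega
        have heak : 2 ∣ a k := aux_even a ha1 ha k (by omega)
        have : 2 ∣ d := hdgcd heven heak
        omega
    · -- k + 1 = 1
      have hk : k = 0 := by omega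
      subst hk
      rw [ha1]
      intro hdvd
      have := Nat.le_of_dvd (by norm_num) hdvd
      omega

end Aux

lemma Cstock_succ (m : ℕ) :
    Cstock (m + 1) = (if Nat.Prime (m + 1) ∧ (m + 1) ≠ 3 then (m + 2) else 1) * Cstock m := by
  unfold Cstock
  have hins : Finset.Iic (m + 1) = insert (m + 1) (Finset.Iic m) := by
    ext q
    simp only [Finset.mem_Iic, Finset.mem_insert]
    omega
  rw [hins, Finset.filter_insert]
  split
  · rw [Finset.prod_insert (by simp)]
  · simp

theorem stmt_5 (a : ℕ → ℕ) (ha1 : a 1 = 1)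
    (ha : ∀ n, 2 ≤ n → a n = a (n - 1) + Nat.lcm n (a (n - 1))) :
    ∀ n, 2 ≤ n → Cstock (n - 1) ∣ a (n - 1) := by
  have main : ∀ m, 1 ≤ m → Cstock m ∣ a m := by
    intro m hm
    induction m with
    | zero => omega
    | succ k ih =>
      rcases Nat.lt_or_ge 1 (k + 1) with h | h
      · -- k + 1 ≥ 2
        have ihk : Cstock k ∣ a k := ih (by omega)
        rw [Cstock_succ]
        split
        · rename_i hp
          obtain ⟨hprime, hne3⟩ := hp
          -- k + 1 is prime, ≠ 3, ≥ 2
          have hcop : Nat.Coprime (k + 1) (a k) := by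
            rcases Nat.lt_or_ge (k + 1) 5 with h5 | h5
            · -- k + 1 = 2 (prime, ≠ 3, < 5, ≥ 2); k + 1 = 4 not prime
              have hk1 : 1 ≤ k := by omega
              have hk3 : k ≤ 3 := by omega
              interval_cases k
              · simp [ha1, Nat.coprime_one_right]
              · omega
              · exact absurd hprime (by norm_num)
            · exact (Nat.Prime.coprime_iff_not_dvd hprime).mpr
                (aux_notdvd a ha1 ha (k + 1) hprime h5 k (by omega) (by omega))
          have hval : a (k + 1) = (k + 2) * a k := by
            have := ha (k + 1) (by omega)
            simp only [Nat.add_sub_cancel] at this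
            rw [this, Nat.Coprime.lcm_eq_mul hcop]
            ring
          rw [hval]
          exact mul_dvd_mul dvd_rfl ihk
        · rw [one_mul]
          exact ihk.trans (aux_mono a ha1 ha k (k + 1) (by omega) (by omega))
      · -- k + 1 = 1
        have : k = 0 := by omega
        subst this
        rw [ha1]
        decide
  intro n hn
  exact main (n - 1) (by omega)
end

section
/- Let x_1 = 1 and x_n = 2·x_{n-1} + lcm(n, x_{n-1}) for n ≥ 2, with c_n = n / gcd(n, x_{n-1}). Suppose p and q = p + 2 are both prime (twin primes). If c_p = p, then c_q = 1. -/
theorem stmt_14 (x c : ℕ → ℕ) (hx1 : x 1 = 1)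
    (hx : ∀ n, 2 ≤ n → x n = 2 * x (n - 1) + Nat.lcm n (x (n - 1)))
    (hc : ∀ n, 2 ≤ n → c n = n / Nat.gcd n (x (n - 1)))
    (p : ℕ) (hp : Nat.Prime p) (hq : Nat.Prime (p + 2)) (hcp : c p = p) :
    c (p + 2) = 1 := by
  have hp2 : 2 ≤ p := hp.two_le
  -- gcd(p, x(p-1)) = 1
  have hd : Nat.gcd p (x (p - 1)) = 1 := by
    rcases (hp.eq_one_or_self_of_dvd _ (Nat.gcd_dvd_left p (x (p - 1)))) with h | h
    · exact h
    · exfalso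
      rw [hc p hp2, h, Nat.div_self hp.pos] at hcp
      omega
  -- x p = (p+2) * x (p-1)
  have hxp : x p = (p + 2) * x (p - 1) := by
    rw [hx p hp2, Nat.Coprime.lcm_eq_mul hd]
    ring
  -- (p+2) ∣ x p ∣ x (p+1)
  have h1 : x p ∣ x (p + 1) := by
    have := hx (p + 1) (by omega)
    simp only [Nat.add_sub_cancel] at this
    rw [this]
    exact Dvd.dvd.add (dvd_mul_left _ 2) (Nat.dvd_lcm_right _ _)
  have h2 : (p + 2) ∣ x (p + 1) := dvd_trans ⟨x (p - 1), hxp⟩ h1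
  rw [hc (p + 2) (by omega)]
  have : p + 2 - 1 = p + 1 := by omega
  rw [this, Nat.gcd_eq_left h2, Nat.div_self (by omega)]
end

section
/- Let x_1 = 1 and x_n = 2·x_{n-1} + lcm(n, x_{n-1}) for n ≥ 2, with c_n = n / gcd(n, x_{n-1}). Assume c_k ∈ {1} ∪ {primes} for all k ≥ 2. Let q ≥ 5 be a prime with c_q = 1. Then q − 2 is prime, i.e., (q−2, q) is a twin prime pair. -/
theorem stmt_16 (x c : ℕ → ℕ) (hx1 : x 1 = 1)
    (hx : ∀ n, 2 ≤ n → x n = 2 * x (n - 1) + Nat.lcm n (x (n - 1)))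
    (hc : ∀ n, 2 ≤ n → c n = n / Nat.gcd n (x (n - 1)))
    (hC1 : ∀ k, 2 ≤ k → c k = 1 ∨ Nat.Prime (c k))
    (q : ℕ) (hq : Nat.Prime q) (hq5 : 5 ≤ q) (hcq : c q = 1) :
    Nat.Prime (q - 2) := by
  have key : ∀ n, 2 ≤ n → x n = (2 + c n) * x (n - 1) := by
    intro n hn
    have hg : Nat.gcd n (x (n - 1)) ∣ n := Nat.gcd_dvd_left _ _
    rw [hx n hn, hc n hn, Nat.lcm, Nat.mul_comm n (x (n - 1)),
      Nat.mul_div_assoc _ hg]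
    ring
  have hdvd : ∀ m, 1 ≤ m → q ∣ x m → ∃ k, 2 ≤ k ∧ k ≤ m ∧ q ∣ 2 + c k := by
    intro m
    induction m with
    | zero => intro h; omega
    | succ n ih =>
      intro _ hdv
      rcases Nat.lt_or_ge n 1 with h | h
      · have hn0 : n = 0 := by omega
        subst hn0
        rw [hx1] at hdv
        exact absurd (Nat.eq_one_of_dvd_one hdv) hq.one_lt.ne'
      · have h2 : 2 ≤ n + 1 := by omega
        rw [key (n + 1) h2] at hdv
        simp only [Nat.add_sub_cancel] at hdv
        rcases (Nat.Prime.dvd_mul hq).1 hdv with h' | h'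
        · exact ⟨n + 1, h2, le_refl _, h'⟩
        · obtain ⟨k, hk1, hk2, hk3⟩ := ih h h'
          exact ⟨k, hk1, by omega, hk3⟩
  have hg : Nat.gcd q (x (q - 1)) = q := by
    rcases hq.eq_one_or_self_of_dvd _ (Nat.gcd_dvd_left q (x (q - 1))) with h | h
    · have : c q = q := by rw [hc q (by omega), h, Nat.div_one]
      omega
    · exact h
  have hqx : q ∣ x (q - 1) := by
    have := Nat.gcd_dvd_right q (x (q - 1))
    rwa [hg] at this
  obtain ⟨k, hk2, hkq, hkd⟩ := hdvd (q - 1) (by omega) hqx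
  have hck : c k ∣ k := by
    rw [hc k hk2]
    exact Nat.div_dvd_of_dvd (Nat.gcd_dvd_left _ _)
  have hckk : c k ≤ k := Nat.le_of_dvd (by omega) hck
  have heq : 2 + c k = q := by
    obtain ⟨t, ht⟩ := hkd
    rcases Nat.lt_or_ge t 2 with h | h
    · interval_cases t <;> omega
    · have : q * 2 ≤ q * t := Nat.mul_le_mul_left q h
      omega
  have hck2 : c k = q - 2 := by omega
  rcases hC1 k hk2 with h | h
  · omega
  · rwa [hck2] at h
end
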